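/- arXiv:1809.07481 — 2 statements merged into one kernel-verified Lean document; each statement's English description precedes it below -/
import Mathlib

section
/- Let S be a subset of R^2, let p, q be points of S, and let g be a path in S from p to q such that the first coordinate function t |-> (g t).1 is monotone on [0,1] (either nondecreasing or nonincreasing) and, independently, the second coordinate function t |-> (g t).2 is monotone on [0,1]. Then d_S(p,q) = ||p - q||_1, and g is a shortest path: its L1 length eVariationOn g (Icc 0 1) equals d_S(p,q). -/
/-! In the `L1` metric a path is at least as long as the distance between its endpoints, while
the length of a planar path is at most the sum of the variations of its two coordinates. For a
monotone real function the variation on `[0,1]` is just the distance between its endpoint values,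
so a path with monotone coordinates has length exactly `‖p - q‖₁`; it is therefore shortest, and
this value is `d_S(p,q)`. -/

open Set

noncomputable section

/-- A path in `S` from `p` to `q`: continuous on `[0,1]`, with the prescribed endpoints,
and staying in `S` on `[0,1]`. The plane carries the `L1` metric via `WithLp 1 (ℝ × ℝ)`. -/
def IsPathIn (S : Set (WithLp 1 (ℝ × ℝ))) (p q : WithLp 1 (ℝ × ℝ))
    (g : ℝ → WithLp 1 (ℝ × ℝ)) : Prop :=
  ContinuousOn g (Icc 0 1) ∧ g 0 = p ∧ g 1 = q ∧ ∀ x ∈ Icc (0:ℝ) 1, g x ∈ S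

/-- The intrinsic `L1` distance in `S`: the infimum of the `L1` lengths (total variations)
of all paths in `S` from `p` to `q` (infinity if there is no such path). -/
def dS (S : Set (WithLp 1 (ℝ × ℝ))) (p q : WithLp 1 (ℝ × ℝ)) : ENNReal :=
  ⨅ (g : ℝ → WithLp 1 (ℝ × ℝ)) (_ : IsPathIn S p q g), eVariationOn g (Icc 0 1)

section eVariationOn

variable {α : Type*} [LinearOrder α]

lemma eVariationOn_le_add_of_edist_le {E F G : Type*} [PseudoEMetricSpace E]
    [PseudoEMetricSpace F] [PseudoEMetricSpace G] {f : α → E} {f₁ : α → F} {f₂ : α → G}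
    (s : Set α) (h : ∀ x y, edist (f x) (f y) ≤ edist (f₁ x) (f₁ y) + edist (f₂ x) (f₂ y)) :
    eVariationOn f s ≤ eVariationOn f₁ s + eVariationOn f₂ s := by
  refine iSup_le fun ⟨n, u, hu, us⟩ => ?_
  calc ∑ i ∈ Finset.range n, edist (f (u (i + 1))) (f (u i))
      ≤ ∑ i ∈ Finset.range n,
          (edist (f₁ (u (i + 1))) (f₁ (u i)) + edist (f₂ (u (i + 1))) (f₂ (u i))) :=
        Finset.sum_le_sum fun i _ => h _ _
    _ = ∑ i ∈ Finset.range n, edist (f₁ (u (i + 1))) (f₁ (u i))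
          + ∑ i ∈ Finset.range n, edist (f₂ (u (i + 1))) (f₂ (u i)) :=
        Finset.sum_add_distrib
    _ ≤ eVariationOn f₁ s + eVariationOn f₂ s :=
        add_le_add (eVariationOn.sum_le hu us) (eVariationOn.sum_le hu us)

lemma WithLp.eVariationOn_le_fst_add_snd {E F : Type*} [SeminormedAddCommGroup E]
    [SeminormedAddCommGroup F] (f : α → WithLp 1 (E × F)) (s : Set α) :
    eVariationOn f s ≤
      eVariationOn (fun t => (f t).ofLp.1) s + eVariationOn (fun t => (f t).ofLp.2) s :=
  eVariationOn_le_add_of_edist_le s fun x y => (WithLp.prod_edist_eq_of_L1 (f x) (f y)).le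

lemma eVariationOn_neg {E : Type*} [SeminormedAddCommGroup E] (f : α → E) (s : Set α) :
    eVariationOn (fun t => -f t) s = eVariationOn f s := by
  simp only [eVariationOn, edist_neg_neg]

lemma MonotoneOn.eVariationOn_Icc_eq_edist {f : α → ℝ} {a b : α} (hab : a ≤ b)
    (hf : MonotoneOn f (Icc a b)) : eVariationOn f (Icc a b) = edist (f a) (f b) := by
  have ha : a ∈ Icc a b := left_mem_Icc.2 hab
  have hb : b ∈ Icc a b := right_mem_Icc.2 hab
  rw [← inter_self (Icc a b), hf.eVariationOn_eq ha hb, edist_comm, edist_dist, Real.dist_eq,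
    abs_of_nonneg (sub_nonneg.2 (hf ha hb hab))]

lemma AntitoneOn.eVariationOn_Icc_eq_edist {f : α → ℝ} {a b : α} (hab : a ≤ b)
    (hf : AntitoneOn f (Icc a b)) : eVariationOn f (Icc a b) = edist (f a) (f b) := by
  rw [← eVariationOn_neg, hf.neg.eVariationOn_Icc_eq_edist hab, edist_neg_neg]

lemma eVariationOn_Icc_eq_edist_of_monotoneOn_coords {f : α → WithLp 1 (ℝ × ℝ)} {a b : α}
    (hab : a ≤ b)
    (h₁ : MonotoneOn (fun t => (f t).ofLp.1) (Icc a b) ∨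
      AntitoneOn (fun t => (f t).ofLp.1) (Icc a b))
    (h₂ : MonotoneOn (fun t => (f t).ofLp.2) (Icc a b) ∨
      AntitoneOn (fun t => (f t).ofLp.2) (Icc a b)) :
    eVariationOn f (Icc a b) = edist (f a) (f b) := by
  have hvar₁ : eVariationOn (fun t => (f t).ofLp.1) (Icc a b) = edist (f a).ofLp.1 (f b).ofLp.1 :=
    h₁.elim (·.eVariationOn_Icc_eq_edist hab) (·.eVariationOn_Icc_eq_edist hab)
  have hvar₂ : eVariationOn (fun t => (f t).ofLp.2) (Icc a b) = edist (f a).ofLp.2 (f b).ofLp.2 :=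
    h₂.elim (·.eVariationOn_Icc_eq_edist hab) (·.eVariationOn_Icc_eq_edist hab)
  refine le_antisymm ?_ (eVariationOn.edist_le f (left_mem_Icc.2 hab) (right_mem_Icc.2 hab))
  calc eVariationOn f (Icc a b)
      ≤ eVariationOn (fun t => (f t).ofLp.1) (Icc a b)
          + eVariationOn (fun t => (f t).ofLp.2) (Icc a b) :=
        WithLp.eVariationOn_le_fst_add_snd f _
    _ = edist (f a) (f b) := by rw [hvar₁, hvar₂, WithLp.prod_edist_eq_of_L1]; rfl

end eVariationOn

lemma edist_le_dS (S : Set (WithLp 1 (ℝ × ℝ))) (p q : WithLp 1 (ℝ × ℝ)) :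
    edist p q ≤ dS S p q := by
  refine le_iInf₂ fun g ⟨_, hg₀, hg₁, _⟩ => ?_
  rw [← hg₀, ← hg₁]
  exact eVariationOn.edist_le g (left_mem_Icc.2 zero_le_one) (right_mem_Icc.2 zero_le_one)

lemma dS_le_eVariationOn {S : Set (WithLp 1 (ℝ × ℝ))} {p q : WithLp 1 (ℝ × ℝ)}
    {g : ℝ → WithLp 1 (ℝ × ℝ)} (hg : IsPathIn S p q g) :
    dS S p q ≤ eVariationOn g (Icc 0 1) :=
  iInf₂_le g hg

theorem monotone_path_is_shortest_general (S : Set (WithLp 1 (ℝ × ℝ))) (p q : WithLp 1 (ℝ × ℝ))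
    (g : ℝ → WithLp 1 (ℝ × ℝ)) (hg : IsPathIn S p q g)
    (hx : MonotoneOn (fun t => (g t).ofLp.1) (Icc 0 1) ∨ AntitoneOn (fun t => (g t).ofLp.1) (Icc 0 1))
    (hy : MonotoneOn (fun t => (g t).ofLp.2) (Icc 0 1) ∨ AntitoneOn (fun t => (g t).ofLp.2) (Icc 0 1)) :
    dS S p q = (‖p - q‖₊ : ENNReal) ∧ eVariationOn g (Icc 0 1) = dS S p q := by
  have hlen : eVariationOn g (Icc 0 1) = edist p q := by
    rw [← hg.2.1, ← hg.2.2.1]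
    exact eVariationOn_Icc_eq_edist_of_monotoneOn_coords zero_le_one hx hy
  have hd : dS S p q = edist p q :=
    le_antisymm (hlen ▸ dS_le_eVariationOn hg) (edist_le_dS S p q)
  exact ⟨by rw [hd, edist_nndist, nndist_eq_nnnorm], by rw [hlen, hd]⟩

theorem monotone_path_is_shortest (S : Set (WithLp 1 (ℝ × ℝ))) (p q : WithLp 1 (ℝ × ℝ))
    (hp : p ∈ S) (hq : q ∈ S) (g : ℝ → WithLp 1 (ℝ × ℝ)) (hg : IsPathIn S p q g)
    (hx : MonotoneOn (fun t => (g t).ofLp.1) (Icc 0 1) ∨ AntitoneOn (fun t => (g t).ofLp.1) (Icc 0 1))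
    (hy : MonotoneOn (fun t => (g t).ofLp.2) (Icc 0 1) ∨ AntitoneOn (fun t => (g t).ofLp.2) (Icc 0 1)) :
    dS S p q = (‖p - q‖₊ : ENNReal) ∧ eVariationOn g (Icc 0 1) = dS S p q :=
  monotone_path_is_shortest_general S p q g hg hx hy
end
end

section
/- Let S be a subset of R^2, let B be a convex subset of S, let t, p be points of S, and let x* be a point of B. Assume: (i) every path in S from t to p meets B; (ii) for every y in B, d_S(t,y) = d_S(t,x*) + ||x* - y||_1 (with the L1 norm coerced into extended nonnegative reals). Then d_S(t,p) = d_S(t,x*) + d_S(x*,p). -/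
open Set

noncomputable section

/-! The triangle inequality for `dS` gives `≤`. Conversely, any path from `t` to `p`
passes through some `y ∈ B`; splitting it at `y` and replacing the trip `x* → y` by the segment
`[x*, y] ⊆ B`, of length `‖x* - y‖₁`, shows that its length is at least
`d_S(t, y) + d_S(y, p) = d_S(t, x*) + ‖x* - y‖₁ + d_S(y, p) ≥ d_S(t, x*) + d_S(x*, p)`. -/

section eVariationOn

variable {E : Type*} [PseudoEMetricSpace E]

theorem eVariationOn_Icc_add_Icc {α : Type*} [LinearOrder α] (f : α → E) {a b c : α}
    (hab : a ≤ b) (hbc : b ≤ c) :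
    eVariationOn f (Icc a b) + eVariationOn f (Icc b c) = eVariationOn f (Icc a c) := by
  simpa only [univ_inter] using eVariationOn.Icc_add_Icc f hab hbc (mem_univ b)

theorem eVariationOn_comp_lineMap (f : ℝ → E) {a b : ℝ} (hab : a ≤ b) :
    eVariationOn (f ∘ AffineMap.lineMap (k := ℝ) a b) (Icc 0 1) = eVariationOn f (Icc a b) := by
  rw [eVariationOn.comp_eq_of_monotoneOn f _ ((AffineMap.lineMap_mono hab).monotoneOn _),
    ← segment_eq_image_lineMap, segment_eq_Icc hab]

theorem eVariationOn_comp_sub_const (f : ℝ → E) (a b c : ℝ) :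
    eVariationOn (fun x ↦ f (x - c)) (Icc a b) = eVariationOn f (Icc (a - c) (b - c)) := by
  rw [← image_sub_const_Icc]
  exact eVariationOn.comp_eq_of_monotoneOn f _ fun _ _ _ _ h ↦ sub_le_sub_right h c

end eVariationOn

theorem eVariationOn_lineMap_le {E : Type*} [SeminormedAddCommGroup E] [NormedSpace ℝ E]
    (x y : E) : eVariationOn (AffineMap.lineMap x y : ℝ → E) (Icc 0 1) ≤ nndist x y := by
  have hid : eVariationOn (id : ℝ → ℝ) (Icc 0 1) = 1 := by
    have := (monotoneOn_id (s := univ)).eVariationOn_eq (mem_univ (0 : ℝ)) (mem_univ 1)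
    rwa [univ_inter, id, id, sub_zero, ENNReal.ofReal_one] at this
  simpa [hid] using
    (lipschitzWith_lineMap (𝕜 := ℝ) x y).lipschitzOnWith.comp_eVariationOn_le
      (mapsTo_univ id (Icc (0 : ℝ) 1))

local notation "EL" => WithLp 1 (ℝ × ℝ)

theorem dS_le_eVariationOn_s10 {S : Set EL} {g : ℝ → EL} {a b : ℝ} (hab : a ≤ b)
    (hg : ContinuousOn g (Icc a b)) (hgS : MapsTo g (Icc a b) S) :
    dS S (g a) (g b) ≤ eVariationOn g (Icc a b) := by
  have hmaps : MapsTo (AffineMap.lineMap a b) (Icc (0 : ℝ) 1) (Icc a b) := by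
    rw [← segment_eq_Icc hab, segment_eq_image_lineMap]
    exact mapsTo_image _ _
  have hpath : IsPathIn S (g a) (g b) (g ∘ AffineMap.lineMap a b) :=
    ⟨hg.comp (AffineMap.lineMap_continuous).continuousOn hmaps, by simp, by simp,
      fun _ hx ↦ hgS (hmaps hx)⟩
  exact (iInf₂_le _ hpath).trans_eq (eVariationOn_comp_lineMap g hab)

theorem dS_le_add_of_isPathIn {S : Set EL} {a b c : EL} {g₁ g₂ : ℝ → EL}
    (h₁ : IsPathIn S a b g₁) (h₂ : IsPathIn S b c g₂) :
    dS S a c ≤ eVariationOn g₁ (Icc 0 1) + eVariationOn g₂ (Icc 0 1) := by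
  obtain ⟨hc₁, rfl, rfl, hS₁⟩ := h₁
  obtain ⟨hc₂, hg₂, rfl, hS₂⟩ := h₂
  set h : ℝ → EL := fun x ↦ if x ≤ 1 then g₁ x else g₂ (x - 1)
  have eq₁ : EqOn h g₁ (Icc 0 1) := fun x hx ↦ if_pos hx.2
  have eq₂ : EqOn h (fun x ↦ g₂ (x - 1)) (Icc 1 2) := by
    intro x hx
    rcases hx.1.eq_or_lt with rfl | hx1
    · simp [h, hg₂]
    · exact if_neg hx1.not_ge
  have hshift : MapsTo (fun x : ℝ ↦ x - 1) (Icc 1 2) (Icc 0 1) := by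
    intro x hx; constructor <;> linarith [hx.1, hx.2]
  have hcont : ContinuousOn h (Icc 0 2) := by
    rw [← Icc_union_Icc_eq_Icc zero_le_one one_le_two]
    exact ((hc₁.congr eq₁).union_of_isClosed
      ((hc₂.comp (continuous_sub_right 1).continuousOn hshift).congr eq₂)
      isClosed_Icc isClosed_Icc)
  have hS : MapsTo h (Icc 0 2) S := by
    rw [← Icc_union_Icc_eq_Icc zero_le_one one_le_two]
    rintro x (hx | hx)
    · rw [eq₁ hx]; exact hS₁ x hx
    · rw [eq₂ hx]; exact hS₂ _ (hshift hx)
  calc dS S (g₁ 0) (g₂ 1) = dS S (h 0) (h 2) := by simp [h]; norm_num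
    _ ≤ eVariationOn h (Icc 0 2) := dS_le_eVariationOn_s10 zero_le_two hcont hS
    _ = eVariationOn g₁ (Icc 0 1) + eVariationOn g₂ (Icc 0 1) := by
      rw [← eVariationOn_Icc_add_Icc h zero_le_one one_le_two, eVariationOn.eq_of_eqOn eq₁,
        eVariationOn.eq_of_eqOn eq₂, eVariationOn_comp_sub_const]
      norm_num

theorem dS_triangle (S : Set EL) (a b c : EL) : dS S a c ≤ dS S a b + dS S b c := by
  simp_rw [dS, ENNReal.iInf_add, ENNReal.add_iInf]
  exact le_iInf₂ fun g₁ h₁ ↦ le_iInf₂ fun g₂ h₂ ↦ dS_le_add_of_isPathIn h₁ h₂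

theorem dS_le_nnnorm_sub_of_convex {S B : Set EL} (hBS : B ⊆ S) (hB : Convex ℝ B) {x y : EL}
    (hx : x ∈ B) (hy : y ∈ B) : dS S x y ≤ ‖x - y‖₊ := by
  have hpath : IsPathIn S x y (AffineMap.lineMap x y) := by
    refine ⟨AffineMap.lineMap_continuous.continuousOn, by simp, by simp, fun s hs ↦ hBS ?_⟩
    exact hB.segment_subset hx hy ((segment_eq_image_lineMap ℝ x y).symm ▸ mem_image_of_mem _ hs)
  rw [← nndist_eq_nnnorm]
  exact (iInf₂_le _ hpath).trans (eVariationOn_lineMap_le x y)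

theorem dS_through_L1_projection_general (S : Set (WithLp 1 (ℝ × ℝ)))
    (B : Set (WithLp 1 (ℝ × ℝ))) (hBS : B ⊆ S) (hBconv : Convex ℝ B)
    (t p : WithLp 1 (ℝ × ℝ))
    (xstar : WithLp 1 (ℝ × ℝ)) (hxstar : xstar ∈ B)
    (hsep : ∀ g : ℝ → WithLp 1 (ℝ × ℝ), IsPathIn S t p g → ∃ c ∈ Icc (0:ℝ) 1, g c ∈ B)
    (hproj : ∀ y ∈ B, dS S t y = dS S t xstar + (‖xstar - y‖₊ : ENNReal)) :
    dS S t p = dS S t xstar + dS S xstar p := by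
  refine le_antisymm (dS_triangle S t xstar p) (le_iInf₂ fun g hg ↦ ?_)
  obtain ⟨c, hc, hgc⟩ := hsep g hg
  obtain ⟨hcont, rfl, rfl, hgS⟩ := hg
  have hsplit : dS S xstar (g 1) ≤ ‖xstar - g c‖₊ + dS S (g c) (g 1) :=
    (dS_triangle S _ _ _).trans (by gcongr; exact dS_le_nnnorm_sub_of_convex hBS hBconv hxstar hgc)
  calc dS S (g 0) xstar + dS S xstar (g 1)
      ≤ dS S (g 0) xstar + ‖xstar - g c‖₊ + dS S (g c) (g 1) := by
        rw [add_assoc]; gcongr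
    _ = dS S (g 0) (g c) + dS S (g c) (g 1) := by rw [hproj _ hgc]
    _ ≤ eVariationOn g (Icc 0 c) + eVariationOn g (Icc c 1) := by
        gcongr
        · exact dS_le_eVariationOn_s10 hc.1 (hcont.mono (Icc_subset_Icc_right hc.2))
            fun x hx ↦ hgS x (Icc_subset_Icc_right hc.2 hx)
        · exact dS_le_eVariationOn_s10 hc.2 (hcont.mono (Icc_subset_Icc_left hc.1))
            fun x hx ↦ hgS x (Icc_subset_Icc_left hc.1 hx)
    _ = eVariationOn g (Icc 0 1) := eVariationOn_Icc_add_Icc g hc.1 hc.2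

theorem dS_through_L1_projection (S : Set (WithLp 1 (ℝ × ℝ)))
    (B : Set (WithLp 1 (ℝ × ℝ))) (hBS : B ⊆ S) (hBconv : Convex ℝ B)
    (t p : WithLp 1 (ℝ × ℝ)) (ht : t ∈ S) (hp : p ∈ S)
    (xstar : WithLp 1 (ℝ × ℝ)) (hxstar : xstar ∈ B)
    (hsep : ∀ g : ℝ → WithLp 1 (ℝ × ℝ), IsPathIn S t p g → ∃ c ∈ Icc (0:ℝ) 1, g c ∈ B)
    (hproj : ∀ y ∈ B, dS S t y = dS S t xstar + (‖xstar - y‖₊ : ENNReal)) :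
    dS S t p = dS S t xstar + dS S xstar p :=
  dS_through_L1_projection_general S B hBS hBconv t p xstar hxstar hsep hproj
end
end
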